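/- Let M be a subspace of a real Banach space E. Then M has property-U in E if and only if M has property-SNP with respect to the generating family ℱ of the weak topology on E. -/

import Mathlib

open scoped ENNReal

noncomputable section

/-- `χ_ρ(g) = sup { |g v| : ρ v ≤ 1 } ∈ [0,∞]`. -/
def chi {V : Type*} [AddCommGroup V] [Module ℝ V] [TopologicalSpace V]
    (ρ : V → ℝ) (g : V →L[ℝ] ℝ) : ℝ≥0∞ :=
  ⨆ v ∈ {v : V | ρ v ≤ 1}, ENNReal.ofReal |g v|

/-- The seminorm `ρ_F(x) = max_{f ∈ F} |f x|` of the weak topology, for a finite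
set `F` of functionals. -/
def rhoF {E : Type*} [NormedAddCommGroup E] [NormedSpace ℝ E]
    (F : Finset (E →L[ℝ] ℝ)) (x : E) : ℝ :=
  ⨆ f ∈ F, |f x|

/-- `M` has property-U in `E`: every continuous linear functional on `M` has a unique
norm-preserving extension to `E`. -/
def PropertyU {E : Type*} [NormedAddCommGroup E] [NormedSpace ℝ E]
    (M : Submodule ℝ E) : Prop :=
  ∀ f : M →L[ℝ] ℝ, ∃! g : E →L[ℝ] ℝ, g.comp M.subtypeL = f ∧ ‖g‖ = ‖f‖

/-- `M` has property-SNP with respect to the generating family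
`ℱ = {ρ_F : F ⊆ B_{E*} finite}` of the weak topology on `E`. -/
def SNPweak {E : Type*} [NormedAddCommGroup E] [NormedSpace ℝ E]
    (M : Submodule ℝ E) : Prop :=
  ∀ f : M →L[ℝ] ℝ, ∃ F₀ : Finset (E →L[ℝ] ℝ), (∀ φ ∈ F₀, ‖φ‖ ≤ 1) ∧
    chi (fun y : M => rhoF F₀ (y : E)) f < ⊤ ∧ ∃ ft : E →L[ℝ] ℝ,
      ∀ F : Finset (E →L[ℝ] ℝ), (∀ φ ∈ F, ‖φ‖ ≤ 1) → (∀ x, rhoF F₀ x ≤ rhoF F x) →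
        (ft.comp M.subtypeL = f ∧ chi (rhoF F) ft = chi (fun y : M => rhoF F (y : E)) f) ∧
        ∀ g : E →L[ℝ] ℝ, g.comp M.subtypeL = f →
          chi (rhoF F) g = chi (fun y : M => rhoF F (y : E)) f → g = ft

section Aux

variable {E : Type*} [NormedAddCommGroup E] [NormedSpace ℝ E]

lemma rhoF_nonneg (F : Finset (E →L[ℝ] ℝ)) (x : E) : 0 ≤ rhoF F x :=
  Real.iSup_nonneg fun _ => Real.iSup_nonneg fun _ => abs_nonneg _

lemma rhoF_le_norm {F : Finset (E →L[ℝ] ℝ)} (hF : ∀ φ ∈ F, ‖φ‖ ≤ 1) (x : E) :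
    rhoF F x ≤ ‖x‖ := by
  refine Real.iSup_le (fun f => Real.iSup_le (fun hf => ?_) (norm_nonneg x)) (norm_nonneg x)
  calc |f x| = ‖f x‖ := (Real.norm_eq_abs _).symm
    _ ≤ ‖f‖ * ‖x‖ := f.le_opNorm x
    _ ≤ 1 * ‖x‖ := mul_le_mul_of_nonneg_right (hF f hf) (norm_nonneg x)
    _ = ‖x‖ := one_mul _

lemma abs_le_rhoF {F : Finset (E →L[ℝ] ℝ)} (hF : ∀ φ ∈ F, ‖φ‖ ≤ 1)
    {φ : E →L[ℝ] ℝ} (hφ : φ ∈ F) (x : E) : |φ x| ≤ rhoF F x := by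
  have hb : BddAbove (Set.range fun f : E →L[ℝ] ℝ => ⨆ _ : f ∈ F, |f x|) := by
    refine ⟨‖x‖, ?_⟩
    rintro _ ⟨f, rfl⟩
    refine Real.iSup_le (fun hf => ?_) (norm_nonneg x)
    calc |f x| = ‖f x‖ := (Real.norm_eq_abs _).symm
      _ ≤ ‖f‖ * ‖x‖ := f.le_opNorm x
      _ ≤ 1 * ‖x‖ := mul_le_mul_of_nonneg_right (hF f hf) (norm_nonneg x)
      _ = ‖x‖ := one_mul _
  calc |φ x| = ⨆ _ : φ ∈ F, |φ x| := (ciSup_pos (f := fun _ : φ ∈ F => |φ x|) hφ).symm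
    _ ≤ rhoF F x := le_ciSup hb φ

lemma rhoF_mono {F F' : Finset (E →L[ℝ] ℝ)} (h : F ⊆ F')
    (hF' : ∀ φ ∈ F', ‖φ‖ ≤ 1) (x : E) : rhoF F x ≤ rhoF F' x :=
  Real.iSup_le (fun f => Real.iSup_le (fun hf => abs_le_rhoF hF' (h hf) x)
    (rhoF_nonneg _ _)) (rhoF_nonneg _ _)

lemma chi_le_ofReal {V : Type*} [AddCommGroup V] [Module ℝ V] [TopologicalSpace V]
    {ρ : V → ℝ} {g : V →L[ℝ] ℝ} {c : ℝ} (h : ∀ v, ρ v ≤ 1 → |g v| ≤ c) :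
    chi ρ g ≤ ENNReal.ofReal c :=
  iSup₂_le fun v hv => ENNReal.ofReal_le_ofReal (h v hv)

lemma ofReal_le_chi {V : Type*} [AddCommGroup V] [Module ℝ V] [TopologicalSpace V]
    {ρ : V → ℝ} {g : V →L[ℝ] ℝ} {v : V} (hv : ρ v ≤ 1) :
    ENNReal.ofReal |g v| ≤ chi ρ g :=
  le_iSup₂ (f := fun (v : V) (_ : v ∈ {v : V | ρ v ≤ 1}) => ENNReal.ofReal |g v|) v hv

lemma opNorm_le_of_unit {V : Type*} [NormedAddCommGroup V] [NormedSpace ℝ V]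
    {g : V →L[ℝ] ℝ} {c : ℝ} (hc : 0 ≤ c) (h : ∀ v, ‖v‖ ≤ 1 → |g v| ≤ c) : ‖g‖ ≤ c :=
  ContinuousLinearMap.opNorm_le_of_unit_norm hc fun v hv => by
    rw [Real.norm_eq_abs]; exact h v hv.le

lemma ofReal_norm_le_chi {V : Type*} [NormedAddCommGroup V] [NormedSpace ℝ V]
    {ρ : V → ℝ} {g : V →L[ℝ] ℝ} (h : ∀ v, ‖v‖ ≤ 1 → ρ v ≤ 1) :
    ENNReal.ofReal ‖g‖ ≤ chi ρ g := by
  by_cases ht : chi ρ g = ⊤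
  · simp [ht]
  · have hle : ∀ v, ‖v‖ ≤ 1 → |g v| ≤ (chi ρ g).toReal := fun v hv =>
      (ENNReal.ofReal_le_iff_le_toReal ht).mp (ofReal_le_chi (h v hv))
    have hn : ‖g‖ ≤ (chi ρ g).toReal := opNorm_le_of_unit ENNReal.toReal_nonneg hle
    calc ENNReal.ofReal ‖g‖ ≤ ENNReal.ofReal (chi ρ g).toReal :=
          ENNReal.ofReal_le_ofReal hn
      _ = chi ρ g := ENNReal.ofReal_toReal ht

lemma norm_restrict_le {M : Submodule ℝ E} {g : E →L[ℝ] ℝ} {f : M →L[ℝ] ℝ}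
    (hg : g.comp M.subtypeL = f) : ‖f‖ ≤ ‖g‖ := by
  rw [← hg]
  refine ContinuousLinearMap.opNorm_le_bound _ (norm_nonneg g) fun y => ?_
  calc ‖(g.comp M.subtypeL) y‖ = ‖g (y : E)‖ := by simp
    _ ≤ ‖g‖ * ‖(y : E)‖ := g.le_opNorm _
    _ = ‖g‖ * ‖y‖ := by rw [Submodule.coe_norm]

end Aux

set_option maxHeartbeats 1000000 in
theorem statement8 {E : Type*} [NormedAddCommGroup E] [NormedSpace ℝ E] [CompleteSpace E]
    (M : Submodule ℝ E) :
    PropertyU M ↔ SNPweak M := by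
  classical
  constructor
  · -- PropertyU → SNPweak
    intro hU f
    by_cases hf : f = 0
    · subst hf
      refine ⟨∅, by simp, ?_, 0, ?_⟩
      · have h0 : chi (fun y : M => rhoF (∅ : Finset (E →L[ℝ] ℝ)) (y : E)) (0 : M →L[ℝ] ℝ)
            ≤ ENNReal.ofReal 0 := chi_le_ofReal fun v _ => by simp
        exact h0.trans_lt (by simp)
      · intro F hF _
        have hchiM : chi (fun y : M => rhoF F (y : E)) (0 : M →L[ℝ] ℝ) = 0 :=
          le_antisymm (by simpa using
            (chi_le_ofReal (ρ := fun y : M => rhoF F (y : E)) (g := (0 : M →L[ℝ] ℝ)) (c := 0)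
              fun v _ => by simp)) zero_le
        have hchiE : chi (rhoF F) (0 : E →L[ℝ] ℝ) = 0 :=
          le_antisymm (by simpa using
            (chi_le_ofReal (ρ := rhoF F) (g := (0 : E →L[ℝ] ℝ)) (c := 0)
              fun v _ => by simp)) zero_le
        refine ⟨⟨by ext y; simp, by rw [hchiM, hchiE]⟩, ?_⟩
        intro g hg hchi
        rw [hchiM] at hchi
        have hn : ‖g‖ ≤ 0 := opNorm_le_of_unit le_rfl fun v hv => by
          have h1 : rhoF F v ≤ 1 := (rhoF_le_norm hF v).trans hv
          have h2 := ofReal_le_chi (ρ := rhoF F) (g := g) h1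
          rw [hchi] at h2
          simpa using h2
        have : g = 0 := by
          ext x
          have : ‖g‖ = 0 := le_antisymm hn (norm_nonneg g)
          simp [norm_eq_zero.mp this]
        simp [this]
    · obtain ⟨g, ⟨hgext, hgnorm⟩, hguniq⟩ := hU f
      have hfz : ‖f‖ ≠ 0 := fun h0 => hf ((ContinuousLinearMap.opNorm_zero_iff f).mp h0)
      have hfpos : 0 < ‖f‖ := lt_of_le_of_ne (norm_nonneg f) (Ne.symm hfz)
      set u : E →L[ℝ] ℝ := ‖f‖⁻¹ • g with hu
      have hun : ‖u‖ = 1 := by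
        have hns := norm_smul (α := ℝ) (β := E →L[ℝ] ℝ) ‖f‖⁻¹ g
        rw [Real.norm_eq_abs] at hns
        rw [hu, hns, hgnorm, abs_of_pos (inv_pos.mpr hfpos)]
        field_simp
      have hF₀ : ∀ φ ∈ ({u} : Finset (E →L[ℝ] ℝ)), ‖φ‖ ≤ 1 := by
        intro φ hφ
        rw [Finset.mem_singleton] at hφ
        rw [hφ, hun]
      have hgy : ∀ y : M, g (y : E) = f y := fun y => by
        have := ContinuousLinearMap.ext_iff.mp hgext y
        simpa using this
      have hgu : ∀ x : E, g x = ‖f‖ * u x := fun x => by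
        rw [hu]
        simp only [ContinuousLinearMap.smul_apply, smul_eq_mul]
        field_simp
      have hbound0 : ∀ x : E, rhoF ({u} : Finset (E →L[ℝ] ℝ)) x ≤ 1 → |g x| ≤ ‖f‖ := by
        intro x hx
        have h1 : |u x| ≤ 1 := (abs_le_rhoF hF₀ (Finset.mem_singleton_self u) x).trans hx
        rw [hgu x, abs_mul, abs_of_pos hfpos]
        calc ‖f‖ * |u x| ≤ ‖f‖ * 1 := mul_le_mul_of_nonneg_left h1 hfpos.le
          _ = ‖f‖ := mul_one _
      refine ⟨{u}, hF₀, ?_, g, ?_⟩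
      · refine lt_of_le_of_lt (chi_le_ofReal (c := ‖f‖) ?_) ENNReal.ofReal_lt_top
        intro y hy
        have := hbound0 (y : E) hy
        rwa [hgy y] at this
      · intro F hF hdom
        have hbound : ∀ x : E, rhoF F x ≤ 1 → |g x| ≤ ‖f‖ := fun x hx =>
          hbound0 x ((hdom x).trans hx)
        have hchiE : chi (rhoF F) g = ENNReal.ofReal ‖f‖ := by
          refine le_antisymm (chi_le_ofReal hbound) ?_
          rw [← hgnorm]
          exact ofReal_norm_le_chi fun v hv => (rhoF_le_norm hF v).trans hv
        have hchiM : chi (fun y : M => rhoF F (y : E)) f = ENNReal.ofReal ‖f‖ := by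
          refine le_antisymm (chi_le_ofReal fun y hy => ?_) ?_
          · rw [← hgy y]; exact hbound (y : E) hy
          · exact ofReal_norm_le_chi fun y hy =>
              (rhoF_le_norm hF (y : E)).trans (by rwa [← Submodule.coe_norm])
        refine ⟨⟨hgext, by rw [hchiE, hchiM]⟩, ?_⟩
        intro h hcomp hchi
        refine hguniq h ⟨hcomp, ?_⟩
        rw [hchiM] at hchi
        have hle : ‖h‖ ≤ ‖f‖ := opNorm_le_of_unit hfpos.le fun v hv => by
          have h1 := ofReal_le_chi (ρ := rhoF F) (g := h) ((rhoF_le_norm hF v).trans hv)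
          rw [hchi] at h1
          exact (ENNReal.ofReal_le_ofReal_iff hfpos.le).mp h1
        exact le_antisymm hle (norm_restrict_le hcomp)
  · -- SNPweak → PropertyU
    intro hS f
    by_cases hf : f = 0
    · subst hf
      refine ⟨0, ⟨by ext y; simp, by rw [ContinuousLinearMap.opNorm_zero,
        ContinuousLinearMap.opNorm_zero]⟩, ?_⟩
      rintro h ⟨-, hn⟩
      rw [ContinuousLinearMap.opNorm_zero] at hn
      exact (ContinuousLinearMap.opNorm_zero_iff h).mp hn
    · obtain ⟨F₀, hF₀, -, ft, hft⟩ := hS f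
      obtain ⟨g, hg, hgnorm⟩ := exists_extension_norm_eq M f
      have hgext : g.comp M.subtypeL = f := ContinuousLinearMap.ext fun y => by
        simpa using hg y
      have hfz : ‖f‖ ≠ 0 := fun h0 => hf ((ContinuousLinearMap.opNorm_zero_iff f).mp h0)
      have hfpos : 0 < ‖f‖ := lt_of_le_of_ne (norm_nonneg f) (Ne.symm hfz)
      have key : ∀ h : E →L[ℝ] ℝ, h.comp M.subtypeL = f → ‖h‖ = ‖f‖ → h = ft := by
        intro h hcomp hnorm
        set u : E →L[ℝ] ℝ := ‖f‖⁻¹ • h with hu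
        set F : Finset (E →L[ℝ] ℝ) := insert u F₀ with hFdef
        have hun : ‖u‖ = 1 := by
          have hns := norm_smul (α := ℝ) (β := E →L[ℝ] ℝ) ‖f‖⁻¹ h
          rw [Real.norm_eq_abs] at hns
          rw [hu, hns, hnorm, abs_of_pos (inv_pos.mpr hfpos)]
          field_simp
        have hF : ∀ φ ∈ F, ‖φ‖ ≤ 1 := by
          intro φ hφ
          rcases Finset.mem_insert.mp hφ with hφ | hφ
          · rw [hφ, hun]
          · exact hF₀ φ hφ
        have hdom : ∀ x, rhoF F₀ x ≤ rhoF F x := fun x =>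
          rhoF_mono (Finset.subset_insert _ _) hF x
        obtain ⟨-, huniq⟩ := hft F hF hdom
        refine huniq h hcomp ?_
        have hhy : ∀ y : M, h (y : E) = f y := fun y => by
          have := ContinuousLinearMap.ext_iff.mp hcomp y
          simpa using this
        have hhu : ∀ x : E, h x = ‖f‖ * u x := fun x => by
          rw [hu]
          simp only [ContinuousLinearMap.smul_apply, smul_eq_mul]
          field_simp
        have hbound : ∀ x : E, rhoF F x ≤ 1 → |h x| ≤ ‖f‖ := by
          intro x hx
          have h1 : |u x| ≤ 1 :=
            (abs_le_rhoF hF (Finset.mem_insert_self u F₀) x).trans hx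
          rw [hhu x, abs_mul, abs_of_pos hfpos]
          calc ‖f‖ * |u x| ≤ ‖f‖ * 1 := mul_le_mul_of_nonneg_left h1 hfpos.le
            _ = ‖f‖ := mul_one _
        have hchiE : chi (rhoF F) h = ENNReal.ofReal ‖f‖ := by
          refine le_antisymm (chi_le_ofReal hbound) ?_
          rw [← hnorm]
          exact ofReal_norm_le_chi fun v hv => (rhoF_le_norm hF v).trans hv
        have hchiM : chi (fun y : M => rhoF F (y : E)) f = ENNReal.ofReal ‖f‖ := by
          refine le_antisymm (chi_le_ofReal fun y hy => ?_) ?_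
          · rw [← hhy y]; exact hbound (y : E) hy
          · exact ofReal_norm_le_chi fun y hy =>
              (rhoF_le_norm hF (y : E)).trans (by rwa [← Submodule.coe_norm])
        rw [hchiE, hchiM]
      have hftg : g = ft := key g hgext hgnorm
      refine ⟨ft, ⟨?_, ?_⟩, ?_⟩
      · rw [← hftg]; exact hgext
      · rw [← hftg]; exact hgnorm
      · rintro h ⟨hcomp, hnorm⟩
        exact key h hcomp hnorm
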